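/- arXiv:2105.06903 — 3 statements merged into one kernel-verified Lean document; each statement's English description precedes it below -/
import Mathlib

section
/- Let (Ω, ℱ) be a measurable space, let p be a probability measure on Ω, and let h : Ω → ℝ be a bounded measurable function. Set Z = ∫ exp(−h) dp and let q* be the measure with density exp(−h)/Z with respect to p (i.e. q* = p.withDensity (fun ω => exp(−h ω)/Z)). Then q* is a probability measure and KL(q* ‖ p) + ∫ h dq* = − log Z. Consequently q* attains the minimum of q ↦ KL(q ‖ p) + ∫ h dq over all probability measures q absolutely continuous with respect to p. -/
open MeasureTheory Real

/-!
The measure `q* = p.tilted (-h)` has log-likelihood ratio `-h - log Z` against `p`, so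
`KL(q* ‖ p) + ∫ h dq* = -log Z` exactly. For any other `q ≪ p`, the tilting identity
`KL(q ‖ q*) = KL(q ‖ p) + ∫ h dq + log Z` together with Gibbs' inequality `KL(q ‖ q*) ≥ 0`
gives `-log Z ≤ KL(q ‖ p) + ∫ h dq`.
-/

/-- The Kullback–Leibler divergence of `q` from `p`: equal to `∫ log (dq/dp) dq` when
`q ≪ p` (with value `+∞` when that extended-valued integral diverges), and `+∞` otherwise. -/
noncomputable def klDiv {Ω : Type*} [MeasurableSpace Ω] (q p : Measure Ω) : EReal :=
  open scoped Classical in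
  if q ≪ p ∧ Integrable (llr q p) q then ((∫ ω, llr q p ω ∂q : ℝ) : EReal) else ⊤

section KLDivergence

variable {Ω : Type*} [MeasurableSpace Ω] {μ ν : Measure Ω}

lemma klDiv_of_ac_of_integrable (hμν : μ ≪ ν) (h_int : Integrable (llr μ ν) μ) :
    klDiv μ ν = ((∫ x, llr μ ν x ∂μ : ℝ) : EReal) := by
  rw [klDiv, if_pos ⟨hμν, h_int⟩]

lemma klDiv_of_not_integrable (h_int : ¬ Integrable (llr μ ν) μ) : klDiv μ ν = ⊤ := by
  rw [klDiv, if_neg fun h ↦ h_int h.2]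

lemma integral_llr_nonneg [IsProbabilityMeasure μ] [IsProbabilityMeasure ν] (hμν : μ ≪ ν)
    (h_int : Integrable (llr μ ν) μ) : 0 ≤ ∫ x, llr μ ν x ∂μ := by
  simpa using InformationTheory.integral_llr_add_sub_measure_univ_nonneg hμν h_int

lemma integral_sub_integral_llr_le_log_integral_exp [IsProbabilityMeasure μ]
    [IsProbabilityMeasure ν] {f : Ω → ℝ} (hμν : μ ≪ ν) (hfμ : Integrable f μ)
    (hfν : Integrable (fun x ↦ exp (f x)) ν) (h_int : Integrable (llr μ ν) μ) :
    ∫ x, f x ∂μ - ∫ x, llr μ ν x ∂μ ≤ log (∫ x, exp (f x) ∂ν) := by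
  have : IsProbabilityMeasure (ν.tilted f) := isProbabilityMeasure_tilted hfν
  have h_gibbs := integral_llr_nonneg (hμν.trans (absolutelyContinuous_tilted hfν))
    (integrable_llr_tilted_right hμν hfμ h_int hfν)
  rw [integral_llr_tilted_right hμν hfμ hfν h_int] at h_gibbs
  linarith

lemma llr_tilted_self_ae_eq [IsProbabilityMeasure μ] {f : Ω → ℝ}
    (hf : Integrable (fun x ↦ exp (f x)) μ) (hfm : AEMeasurable f μ) :
    llr (μ.tilted f) μ =ᵐ[μ] fun x ↦ f x - log (∫ z, exp (f z) ∂μ) := by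
  filter_upwards [llr_tilted_left Measure.AbsolutelyContinuous.rfl hf hfm, llr_self μ]
    with x hx hx_self
  rw [hx, hx_self, Pi.zero_apply, add_zero]

lemma klDiv_tilted_self [IsProbabilityMeasure μ] {f : Ω → ℝ}
    (hf : Integrable (fun x ↦ exp (f x)) μ) (hfm : AEMeasurable f μ)
    (hf_tilted : Integrable f (μ.tilted f)) :
    klDiv (μ.tilted f) μ
      = ((∫ x, f x ∂(μ.tilted f) - log (∫ x, exp (f x) ∂μ) : ℝ) : EReal) := by
  have : IsProbabilityMeasure (μ.tilted f) := isProbabilityMeasure_tilted hf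
  have h_llr := (tilted_absolutelyContinuous μ f).ae_le (llr_tilted_self_ae_eq hf hfm)
  have h_int : Integrable (llr (μ.tilted f) μ) (μ.tilted f) :=
    (integrable_congr h_llr).mpr (hf_tilted.sub (integrable_const _))
  rw [klDiv_of_ac_of_integrable (tilted_absolutelyContinuous μ f) h_int,
    integral_congr_ae h_llr, integral_sub hf_tilted (integrable_const _)]
  simp

end KLDivergence

section GibbsVariationalPrinciple

variable {Ω : Type*} [MeasurableSpace Ω] {p : Measure Ω} [IsProbabilityMeasure p] {h : Ω → ℝ}

lemma klDiv_tilted_neg_add_integral (hexp : Integrable (fun x ↦ exp (-h x)) p)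
    (hm : AEMeasurable h p) (hh : Integrable h (p.tilted (-h ·))) :
    klDiv (p.tilted (-h ·)) p + ((∫ x, h x ∂(p.tilted (-h ·)) : ℝ) : EReal)
      = ((-log (∫ x, exp (-h x) ∂p) : ℝ) : EReal) := by
  rw [klDiv_tilted_self hexp hm.neg hh.neg, ← EReal.coe_add, integral_neg]
  ring_nf

lemma neg_log_integral_exp_neg_le_klDiv_add_integral (q : Measure Ω) [IsProbabilityMeasure q]
    (hqp : q ≪ p) (hh : Integrable h q) (hexp : Integrable (fun x ↦ exp (-h x)) p) :
    ((-log (∫ x, exp (-h x) ∂p) : ℝ) : EReal) ≤ klDiv q p + ((∫ x, h x ∂q : ℝ) : EReal) := by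
  by_cases h_int : Integrable (llr q p) q
  · rw [klDiv_of_ac_of_integrable hqp h_int, ← EReal.coe_add, EReal.coe_le_coe_iff]
    have := integral_sub_integral_llr_le_log_integral_exp (f := (-h ·)) hqp hh.neg hexp h_int
    rw [integral_neg] at this
    linarith
  · rw [klDiv_of_not_integrable h_int, EReal.top_add_coe]
    exact le_top

end GibbsVariationalPrinciple

theorem stmt1 {Ω : Type*} [MeasurableSpace Ω] (p : Measure Ω) [IsProbabilityMeasure p]
    (h : Ω → ℝ) (hmeas : Measurable h) (hbdd : ∃ M : ℝ, ∀ ω, |h ω| ≤ M)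
    (Z : ℝ) (hZ : Z = ∫ ω, Real.exp (- h ω) ∂p)
    (qstar : Measure Ω)
    (hqstar : qstar = p.withDensity (fun ω => ENNReal.ofReal (Real.exp (- h ω) / Z))) :
    IsProbabilityMeasure qstar ∧
    klDiv qstar p + ((∫ ω, h ω ∂qstar : ℝ) : EReal) = ((- Real.log Z : ℝ) : EReal) ∧
    ∀ q : Measure Ω, IsProbabilityMeasure q → q ≪ p →
      klDiv qstar p + ((∫ ω, h ω ∂qstar : ℝ) : EReal)
        ≤ klDiv q p + ((∫ ω, h ω ∂q : ℝ) : EReal) := by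
  obtain ⟨M, hM⟩ := hbdd
  have hh_int (μ : Measure Ω) [IsFiniteMeasure μ] : Integrable h μ :=
    .of_bound hmeas.aestronglyMeasurable M (.of_forall hM)
  have hexp_int : Integrable (fun ω ↦ exp (-h ω)) p :=
    .of_bound (hmeas.neg.exp).aestronglyMeasurable (exp M) <| .of_forall fun ω ↦ by
      rw [norm_of_nonneg (exp_pos _).le, exp_le_exp]
      linarith [neg_abs_le (h ω), hM ω]
  have htilted : qstar = p.tilted (-h ·) := by rw [hqstar, Measure.tilted, hZ]
  subst htilted hZ
  have : IsProbabilityMeasure (p.tilted (-h ·)) := isProbabilityMeasure_tilted hexp_int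
  have hmin := klDiv_tilted_neg_add_integral hexp_int hmeas.aemeasurable (hh_int _)
  refine ⟨this, hmin, fun q _ hqp ↦ ?_⟩
  rw [hmin]
  exact neg_log_integral_exp_neg_le_klDiv_add_integral q hqp (hh_int q) hexp_int
end

section
/- Let (Ω, ℱ) be a measurable space, let p be a probability measure on Ω, and let h : Ω → ℝ be a bounded measurable function. If a probability measure q, absolutely continuous with respect to p, satisfies KL(q ‖ p) + ∫ h dq = − log ∫ exp(−h) dp, then q equals the tilted measure q* = p.withDensity (fun ω => exp(−h ω)/Z) with Z = ∫ exp(−h) dp; that is, the minimiser of the posterior-regularisation objective is unique. -/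
open MeasureTheory Real

lemma aux_key {x : ℝ} (hx : 0 ≤ x) :
    0 ≤ x * Real.log x + 1 - x ∧ (x * Real.log x + 1 - x = 0 → x = 1) := by
  rcases eq_or_lt_of_le hx with h0 | h0
  · simp [← h0]
  · rcases eq_or_ne x 1 with h1 | h1
    · simp [h1]
    · have hlt : Real.log x⁻¹ < x⁻¹ - 1 :=
        Real.log_lt_sub_one_of_pos (by positivity) (fun h => h1 (inv_eq_one.mp h))
      rw [Real.log_inv] at hlt
      have hx' : x * x⁻¹ = 1 := mul_inv_cancel₀ h0.ne'
      have hmul := mul_lt_mul_of_pos_left hlt h0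
      constructor
      · nlinarith
      · intro h; nlinarith

/-- Gibbs equality: if `∫ llr q m dq = 0` then `q = m`. -/
lemma gibbs_eq {Ω : Type*} [MeasurableSpace Ω] (q m : Measure Ω)
    [IsProbabilityMeasure q] [IsProbabilityMeasure m]
    (hqm : q ≪ m) (hint : Integrable (llr q m) q) (hI : ∫ ω, llr q m ω ∂q = 0) : q = m := by
  set g : Ω → ℝ := fun x => (q.rnDeriv m x).toReal with hg
  have hg_int : Integrable g m := Measure.integrable_toReal_rnDeriv
  have hg_one : ∫ x, g x ∂m = 1 := by
    rw [hg]; rw [Measure.integral_toReal_rnDeriv hqm]; simp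
  have hgl_int : Integrable (fun x => g x * llr q m x) m := by
    have := (integrable_rnDeriv_smul_iff (f := llr q m) hqm).mpr hint
    simpa [smul_eq_mul] using this
  have hgl : ∫ x, g x * llr q m x ∂m = 0 := by
    rw [← hI]
    have := integral_rnDeriv_smul (f := llr q m) hqm
    simpa [smul_eq_mul] using this
  have hllr : ∀ x, llr q m x = Real.log (g x) := fun x => rfl
  have h1 : Integrable (fun x => g x * Real.log (g x)) m := by
    simpa [hllr] using hgl_int
  have h2 : Integrable (fun x => g x * Real.log (g x) + 1) m := h1.add (integrable_const 1)
  have hφ_int : Integrable (fun x => g x * Real.log (g x) + 1 - g x) m := h2.sub hg_int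
  have hφ_integral : ∫ x, (g x * Real.log (g x) + 1 - g x) ∂m = 0 := by
    rw [integral_sub h2 hg_int, integral_add h1 (integrable_const 1)]
    have : ∫ x, g x * Real.log (g x) ∂m = 0 := by simpa [hllr] using hgl
    simp [this, hg_one]
  have hφ_nonneg : 0 ≤ᵐ[m] fun x => g x * Real.log (g x) + 1 - g x :=
    Filter.Eventually.of_forall fun x => (aux_key (ENNReal.toReal_nonneg)).1
  have hzero : (fun x => g x * Real.log (g x) + 1 - g x) =ᵐ[m] 0 :=
    (integral_eq_zero_iff_of_nonneg_ae hφ_nonneg hφ_int).mp hφ_integral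
  have hgone : ∀ᵐ x ∂m, g x = 1 := by
    filter_upwards [hzero] with x hx
    exact (aux_key (ENNReal.toReal_nonneg)).2 hx
  have hrn : q.rnDeriv m =ᵐ[m] fun _ => 1 := by
    filter_upwards [hgone, Measure.rnDeriv_lt_top q m] with x h1 h2
    rw [← ENNReal.ofReal_toReal h2.ne]
    rw [show (q.rnDeriv m x).toReal = 1 from h1]
    simp
  calc q = m.withDensity (q.rnDeriv m) := (Measure.withDensity_rnDeriv_eq q m hqm).symm
    _ = m.withDensity (fun _ => 1) := withDensity_congr_ae hrn
    _ = m := by simp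

theorem stmt2 {Ω : Type*} [MeasurableSpace Ω] (p : Measure Ω) [IsProbabilityMeasure p]
    (h : Ω → ℝ) (hmeas : Measurable h) (hbdd : ∃ M : ℝ, ∀ ω, |h ω| ≤ M)
    (Z : ℝ) (hZ : Z = ∫ ω, Real.exp (- h ω) ∂p)
    (q : Measure Ω) [IsProbabilityMeasure q] (hac : q ≪ p)
    (hopt : klDiv q p + ((∫ ω, h ω ∂q : ℝ) : EReal) = ((- Real.log Z : ℝ) : EReal)) :
    q = p.withDensity (fun ω => ENNReal.ofReal (Real.exp (- h ω) / Z)) := by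
  obtain ⟨M, hM⟩ := hbdd
  have hexp_int : Integrable (fun ω => Real.exp (-h ω)) p := by
    refine Integrable.mono' (integrable_const (Real.exp M))
      (hmeas.neg.exp.aestronglyMeasurable) (Filter.Eventually.of_forall fun ω => ?_)
    rw [Real.norm_eq_abs, abs_of_pos (Real.exp_pos _)]
    exact Real.exp_le_exp.mpr ((neg_le_abs _).trans (hM ω))
  have hh_int_q : Integrable h q :=
    Integrable.mono' (integrable_const M) hmeas.aestronglyMeasurable
      (Filter.Eventually.of_forall hM)
  have hcond : Integrable (llr q p) q := by
    by_contra hc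
    rw [klDiv, if_neg (fun hh => hc hh.2), EReal.top_add_coe] at hopt
    exact EReal.top_ne_coe _ hopt
  rw [klDiv, if_pos ⟨hac, hcond⟩, ← EReal.coe_add] at hopt
  have hreal : ∫ ω, llr q p ω ∂q + ∫ ω, h ω ∂q = - Real.log Z := by exact_mod_cast hopt
  set m := p.tilted (fun ω => - h ω) with hm
  haveI : IsProbabilityMeasure m := isProbabilityMeasure_tilted hexp_int
  have hqm : q ≪ m := hac.trans (absolutelyContinuous_tilted hexp_int)
  have hnh : Integrable (fun ω => -h ω) q := hh_int_q.neg
  have hint_m : Integrable (llr q m) q :=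
    integrable_llr_tilted_right (f := fun ω => -h ω) hac hnh hcond hexp_int
  have hI : ∫ ω, llr q m ω ∂q = 0 := by
    rw [hm, integral_llr_tilted_right (f := fun ω => -h ω) hac hnh hexp_int hcond,
      integral_neg, ← hZ]
    linarith
  rw [gibbs_eq q m hqm hint_m hI, hm, Measure.tilted, hZ]
end

section
/- For every real number c, the scale-mixture identity exp(−2 · max(0, c)) = ∫₀^∞ (2πλ)^{−1/2} · exp(−(c + λ)²/(2λ)) dλ holds, where the integral is over λ ∈ (0, ∞) with respect to Lebesgue measure. -/
open MeasureTheory Real Set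

/-! Substituting `λ = t ^ 2` and using `(c + t ^ 2) ^ 2 / t ^ 2 = (t - |c| / t) ^ 2 + 4 max(0, c)`
turns the integral into
`2 / √(2π) · exp (-2 max(0, c)) · ∫₀^∞ exp (-(t - |c| / t) ^ 2 / 2) dt`.
The Cauchy–Schlömilch substitution `s = x - b / x` is a bijection of `(0, ∞)` onto `ℝ` whose
inverse has derivative `1 / 2` plus an odd function, so `∫₀^∞ f (x - b / x) dx = ½ ∫ f` for
even integrable `f`; the Gaussian integral `√(2π)` then gives `exp (-2 max(0, c))`. -/

lemma integral_eq_zero_of_odd {G E : Type*} [MeasurableSpace G] [AddGroup G] [MeasurableNeg G]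
    [NormedAddCommGroup E] [NormedSpace ℝ E] (μ : Measure G) [μ.IsNegInvariant] {f : G → E}
    (hf : ∀ x, f (-x) = -f x) : ∫ x, f x ∂μ = 0 := by
  have h := integral_neg_eq_self f μ
  simp only [hf, integral_neg] at h
  rw [neg_eq_iff_add_eq_zero, ← two_smul ℝ] at h
  exact (smul_eq_zero.mp h).resolve_left two_ne_zero

/-- The positive root of `x ^ 2 - s * x - b`; for `0 < b` it inverts `x ↦ x - b / x`
on `(0, ∞)`. -/
noncomputable def subDivInv (b s : ℝ) : ℝ := (s + √(s ^ 2 + 4 * b)) / 2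

section subDivInv

variable {b : ℝ}

lemma abs_lt_sqrt_sq_add (hb : 0 < b) (s : ℝ) : |s| < √(s ^ 2 + 4 * b) := by
  rw [← sqrt_sq_eq_abs]
  exact sqrt_lt_sqrt (sq_nonneg s) (by linarith)

lemma abs_div_sqrt_sq_add_lt_one (hb : 0 < b) (s : ℝ) : |s / √(s ^ 2 + 4 * b)| < 1 := by
  rw [abs_div, abs_of_nonneg (sqrt_nonneg _), div_lt_one (by positivity)]
  exact abs_lt_sqrt_sq_add hb s

lemma add_sqrt_sq_add_pos (hb : 0 < b) (s : ℝ) : 0 < s + √(s ^ 2 + 4 * b) := by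
  linarith [neg_abs_le s, abs_lt_sqrt_sq_add hb s]

lemma subDivInv_pos (hb : 0 < b) (s : ℝ) : 0 < subDivInv b s :=
  half_pos (add_sqrt_sq_add_pos hb s)

lemma subDivInv_sub_div (hb : 0 < b) (s : ℝ) : subDivInv b s - b / subDivInv b s = s := by
  have hpos := add_sqrt_sq_add_pos hb s
  have hsq : √(s ^ 2 + 4 * b) ^ 2 = s ^ 2 + 4 * b := sq_sqrt (by positivity)
  rw [subDivInv, div_div_eq_mul_div]
  field_simp
  linear_combination hsq

lemma subDivInv_of_pos (hb : 0 ≤ b) {x : ℝ} (hx : 0 < x) : subDivInv b (x - b / x) = x := by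
  have hsq : (x - b / x) ^ 2 + 4 * b = (x + b / x) ^ 2 := by
    field_simp
    ring
  rw [subDivInv, hsq, sqrt_sq (by positivity)]
  ring

lemma hasDerivAt_subDivInv (hb : 0 < b) (s : ℝ) :
    HasDerivAt (subDivInv b) ((1 + s / √(s ^ 2 + 4 * b)) / 2) s := by
  have hsqrt : HasDerivAt (fun s => √(s ^ 2 + 4 * b)) (s / √(s ^ 2 + 4 * b)) s := by
    convert ((hasDerivAt_pow 2 s).add_const (4 * b)).sqrt (by positivity) using 1
    ring
  exact ((hasDerivAt_id s).add hsqrt).div_const 2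

lemma range_subDivInv (hb : 0 < b) : range (subDivInv b) = Ioi 0 := by
  refine (range_subset_iff.2 (subDivInv_pos hb)).antisymm fun x hx => ?_
  exact ⟨x - b / x, subDivInv_of_pos hb.le hx⟩

lemma integral_Ioi_comp_sub_div (hb : 0 < b) (f : ℝ → ℝ) :
    ∫ x in Ioi 0, f (x - b / x) = ∫ s, (1 + s / √(s ^ 2 + 4 * b)) / 2 * f s := by
  have hinj : InjOn (subDivInv b) univ :=
    (Function.LeftInverse.injective (g := fun x => x - b / x) (subDivInv_sub_div hb)).injOn
  have h := integral_image_eq_integral_abs_deriv_smul MeasurableSet.univ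
    (fun s _ => (hasDerivAt_subDivInv hb s).hasDerivWithinAt) hinj fun x => f (x - b / x)
  rw [image_univ, range_subDivInv hb, setIntegral_univ] at h
  rw [h]
  congr 1 with s
  have hderiv_nonneg : 0 ≤ (1 + s / √(s ^ 2 + 4 * b)) / 2 := by
    linarith [neg_abs_le (s / √(s ^ 2 + 4 * b)), abs_div_sqrt_sq_add_lt_one hb s]
  rw [subDivInv_sub_div hb, smul_eq_mul, abs_of_nonneg hderiv_nonneg]

lemma integral_Ioi_comp_sub_div_of_even (hb : 0 ≤ b) {f : ℝ → ℝ} (hf : Integrable f)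
    (heven : ∀ x, f (-x) = f x) : ∫ x in Ioi 0, f (x - b / x) = (∫ x, f x) / 2 := by
  rcases hb.eq_or_lt with rfl | hb
  · have habs : ∀ x, f |x| = f x := fun x => by
      rcases abs_choice x with h | h <;> simp only [h, heven]
    simp only [zero_div, sub_zero]
    linarith [integral_comp_abs (f := f), integral_congr_ae (ae_of_all volume habs)]
  have hodd : Integrable fun s => s / √(s ^ 2 + 4 * b) * f s :=
    hf.bdd_mul (c := 1) (measurable_id.div (by fun_prop)).aestronglyMeasurable
      (ae_of_all _ fun s => (abs_div_sqrt_sq_add_lt_one hb s).le)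
  calc ∫ x in Ioi 0, f (x - b / x)
      = ∫ s, (f s / 2 + s / √(s ^ 2 + 4 * b) * f s / 2) := by
        rw [integral_Ioi_comp_sub_div hb]
        congr 1 with s
        ring
    _ = (∫ s, f s) / 2 + (∫ s, s / √(s ^ 2 + 4 * b) * f s) / 2 := by
        rw [integral_add (hf.div_const 2) (hodd.div_const 2), integral_div, integral_div]
    _ = (∫ s, f s) / 2 := by
        rw [integral_eq_zero_of_odd (f := fun s => s / √(s ^ 2 + 4 * b) * f s) volume
          fun s => by simp only [heven, neg_sq, neg_div, neg_mul], zero_div, add_zero]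

end subDivInv

lemma rpow_neg_one_div_two {x : ℝ} (hx : 0 ≤ x) : x ^ (-(1 : ℝ) / 2) = (√x)⁻¹ := by
  rw [neg_div, rpow_neg hx, sqrt_eq_rpow, one_div]

lemma integral_Ioi_comp_sq (g : ℝ → ℝ) :
    ∫ t in Ioi 0, 2 * t * g (t ^ 2) = ∫ l in Ioi 0, g l := by
  rw [← integral_comp_rpow_Ioi_of_pos (g := g) two_pos]
  norm_num [rpow_two]

lemma neg_add_sq_div_two_mul_sq (c : ℝ) {t : ℝ} (ht : t ≠ 0) :
    -(c + t ^ 2) ^ 2 / (2 * t ^ 2) = -2 * max 0 c - (t - |c| / t) ^ 2 / 2 := by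
  rcases le_total 0 c with hc | hc
  · rw [max_eq_right hc, abs_of_nonneg hc]
    field_simp
    ring
  · rw [max_eq_left hc, abs_of_nonpos hc]
    field_simp
    ring

theorem stmt3 (c : ℝ) :
    ∫ l in Set.Ioi (0 : ℝ),
        (2 * Real.pi * l) ^ (-(1 : ℝ) / 2) * Real.exp (-(c + l) ^ 2 / (2 * l))
      = Real.exp (-2 * max 0 c) := by
  have hpoint : ∀ t ∈ Ioi (0 : ℝ), 2 * t * ((2 * π * t ^ 2) ^ (-(1 : ℝ) / 2) *
      exp (-(c + t ^ 2) ^ 2 / (2 * t ^ 2)))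
      = 2 / √(2 * π) * exp (-2 * max 0 c) * exp (-(1 / 2) * (t - |c| / t) ^ 2) := by
    intro t (ht : 0 < t)
    rw [rpow_neg_one_div_two (by positivity), sqrt_mul (by positivity), sqrt_sq ht.le,
      neg_add_sq_div_two_mul_sq c ht.ne', sub_eq_add_neg, exp_add]
    field_simp
  have hgauss : Integrable fun u : ℝ => exp (-(1 / 2) * u ^ 2) :=
    integrable_exp_neg_mul_sq one_half_pos
  rw [← integral_Ioi_comp_sq, setIntegral_congr_fun measurableSet_Ioi hpoint, integral_const_mul,
    integral_Ioi_comp_sub_div_of_even (abs_nonneg c) hgauss (fun u => by rw [neg_sq]),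
    integral_gaussian, div_div_eq_mul_div, div_one, mul_comm π 2]
  field_simp
end
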